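/- Let Ω be a tiling space of the real line whose tilings are concatenations of d tile types with lengths ℓ₁,…,ℓ_d > 0, and whose allowed bi-infinite tile sequences form a C-balanced subshift X. Then for any L > 0, the number of distinct possible lengths of patches (finite legal concatenations of tiles) of total length at most L is at most (L/ℓ_min)·(C+1)^{d−1}, where ℓ_min is the smallest tile length. In particular, the set of possible patch lengths is not asymptotically dense in ℝ. -/
import Mathlib


/-- The shift map on bi-infinite sequences. -/
def shift {A : Type} (x : ℤ → A) : ℤ → A := fun n => x (n + 1)

/-- The language of a set of bi-infinite sequences: all finite subwords. -/
def Lang {A : Type} (X : Set (ℤ → A)) : Set (List A) :=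
  {w | ∃ x ∈ X, ∃ i : ℤ, ∀ j : Fin w.length, x (i + (j.val : ℤ)) = w.get j}

/-- A subshift is `C`-balanced if occurrence counts of each letter in legal
words of equal length differ by at most `C`. -/
def CBalanced {A : Type} [DecidableEq A] (X : Set (ℤ → A)) (C : ℕ) : Prop :=
  ∀ a : A, ∀ w w' : List A, w ∈ Lang X → w' ∈ Lang X → w.length = w'.length →
    |(w.count a : ℤ) - (w'.count a : ℤ)| ≤ (C : ℤ)

/-- The length of the patch based on the word `w`, with tile lengths `ℓ`. -/
def patchLen {A : Type} (ℓ : A → ℝ) (w : List A) : ℝ := (w.map ℓ).sum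

/-- A set `S ⊆ ℝ` is asymptotically dense if for every `ε > 0` all
sufficiently large reals are within `ε` of an element of `S`. -/
def AsympDense (S : Set ℝ) : Prop :=
  ∀ ε > (0 : ℝ), ∃ R : ℝ, ∀ t > R, ∃ s ∈ S, |t - s| < ε

section helpers
variable {A : Type} [Fintype A] [DecidableEq A]

lemma patchLen_eq_sum (ℓ : A → ℝ) (w : List A) :
    patchLen ℓ w = ∑ a, (w.count a : ℝ) * ℓ a := by
  induction w with
  | nil => simp [patchLen]
  | cons b w ih =>
    simp only [patchLen, List.map_cons, List.sum_cons, List.count_cons] at *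
    rw [ih]
    push_cast
    simp only [add_mul, Finset.sum_add_distrib, ite_mul, one_mul, zero_mul, beq_iff_eq]
    rw [Finset.sum_ite_eq Finset.univ b ℓ]
    simp [add_comm]

lemma sum_count_eq_length (w : List A) : ∑ a : A, w.count a = w.length := by
  induction w with
  | nil => simp
  | cons b w ih =>
    simp only [List.count_cons, List.length_cons]
    rw [Finset.sum_add_distrib, ih]
    simp

lemma patchLen_ge (ℓ : A → ℝ) (c : ℝ) (hc : ∀ a, c ≤ ℓ a) (w : List A) :
    (w.length : ℝ) * c ≤ patchLen ℓ w := by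
  induction w with
  | nil => simp [patchLen]
  | cons b w ih =>
    simp only [patchLen, List.map_cons, List.sum_cons, List.length_cons] at *
    push_cast
    nlinarith [hc b]

lemma ncard_biUnion_le (s : Finset ℕ) (f : ℕ → Set ℝ) (hf : ∀ n, (f n).Finite) :
    (⋃ n ∈ s, f n).ncard ≤ ∑ n ∈ s, (f n).ncard := by
  classical
  induction s using Finset.induction with
  | empty => simp
  | @insert a s hx ih =>
    rw [Finset.set_biUnion_insert, Finset.sum_insert hx]
    exact le_trans (Set.ncard_union_le _ _) (by omega)
end helpers

section core
variable {A : Type} [Fintype A] [DecidableEq A] [Nonempty A]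

lemma count_card_le (X : Set (ℤ → A)) (C : ℕ) (hbal : CBalanced X C) (n : ℕ) :
    ((fun w : List A => fun a => w.count a) '' {w | w ∈ Lang X ∧ w.length = n}).ncard
      ≤ (C + 1) ^ (Fintype.card A - 1) := by
  classical
  set W : Set (List A) := {w | w ∈ Lang X ∧ w.length = n} with hW
  have hWfin : W.Finite :=
    Set.Finite.subset (List.finite_length_le A n) (fun w hw => le_of_eq hw.2)
  set V := (fun w : List A => fun a => w.count a) '' W with hV
  have hVfin : V.Finite := hWfin.image _
  rcases V.eq_empty_or_nonempty with hVe | ⟨c₀, hc₀⟩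
  · simp [hVe]
  -- pairwise count bounds from balancedness
  have hpair : ∀ a : A, ∀ c ∈ V, ∀ c' ∈ V, c a ≤ c' a + C := by
    rintro a c ⟨w, hw, rfl⟩ c' ⟨w', hw', rfl⟩
    have h1 := abs_le.mp (hbal a w w' hw.1 hw'.1 (hw.2.trans hw'.2.symm))
    simp only
    omega
  set a₀ : A := Classical.arbitrary A with ha₀
  set m : A → ℕ := fun a => sInf ((fun c : A → ℕ => c a) '' V) with hm
  have hmem : ∀ a, m a ∈ (fun c : A → ℕ => c a) '' V := fun a =>
    Nat.sInf_mem ⟨c₀ a, c₀, hc₀, rfl⟩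
  have hlow : ∀ a, ∀ c ∈ V, m a ≤ c a := fun a c hc => Nat.sInf_le ⟨c, hc, rfl⟩
  have hhigh : ∀ a, ∀ c ∈ V, c a ≤ m a + C := by
    intro a c hc
    obtain ⟨c', hc', hc'a⟩ := hmem a
    rw [← hc'a]
    exact hpair a c hc c' hc'
  -- sums are n
  have hsum : ∀ c ∈ V, ∑ a, c a = n := by
    rintro c ⟨w, hw, rfl⟩
    rw [sum_count_eq_length]; exact hw.2
  -- injection into reduced vectors
  set φ : (A → ℕ) → ({a : A // a ≠ a₀} → ℕ) := fun c x => c x.1 with hφ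
  have hinj : Set.InjOn φ V := by
    intro c hc c' hc' hcc
    funext a
    by_cases ha : a = a₀
    · have h1 := hsum c hc
      have h2 := hsum c' hc'
      have hmemu : a ∈ Finset.univ := Finset.mem_univ a
      rw [← Finset.add_sum_erase _ _ hmemu] at h1 h2
      have : ∑ x ∈ Finset.univ.erase a, c x = ∑ x ∈ Finset.univ.erase a, c' x := by
        apply Finset.sum_congr rfl
        intro x hx
        have hxa : x ≠ a := (Finset.mem_erase.mp hx).1
        exact congrFun hcc ⟨x, fun h => hxa (h.trans ha.symm)⟩
      omega
    · exact congrFun hcc ⟨a, ha⟩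
  set F : Finset ({a : A // a ≠ a₀} → ℕ) :=
    Fintype.piFinset (fun x => Finset.Icc (m x.1) (m x.1 + C)) with hF
  have hsub : φ '' V ⊆ ↑F := by
    rintro _ ⟨c, hc, rfl⟩
    simp only [hF, Finset.coe_sort_coe, Fintype.mem_piFinset, Finset.mem_Icc, Finset.mem_coe]
    exact fun x => ⟨hlow x.1 c hc, hhigh x.1 c hc⟩
  have hcard : V.ncard ≤ F.card := by
    rw [← Set.ncard_image_of_injOn hinj, ← Set.ncard_coe_finset]
    exact Set.ncard_le_ncard hsub F.finite_toSet
  have hFcard : F.card = (C + 1) ^ (Fintype.card A - 1) := by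
    rw [hF, Fintype.card_piFinset]
    have he : ∀ x : {a : A // a ≠ a₀}, (Finset.Icc (m x.1) (m x.1 + C)).card = C + 1 := by
      intro x; rw [Nat.card_Icc]; omega
    simp only [he]
    rw [Finset.prod_const, Finset.card_univ, Fintype.card_subtype_compl,
      Fintype.card_subtype_eq]
  exact hFcard ▸ hcard
end core

section main
variable {A : Type} [Fintype A] [DecidableEq A] [Nonempty A]

lemma patch_card_le (ℓ : A → ℝ) (X : Set (ℤ → A)) (C : ℕ) (hbal : CBalanced X C) (n : ℕ) :
    (patchLen ℓ '' {w | w ∈ Lang X ∧ w.length = n}).ncard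
      ≤ (C + 1) ^ (Fintype.card A - 1) := by
  classical
  set W : Set (List A) := {w | w ∈ Lang X ∧ w.length = n} with hW
  have hWfin : W.Finite :=
    Set.Finite.subset (List.finite_length_le A n) (fun w hw => le_of_eq hw.2)
  set g : (A → ℕ) → ℝ := fun c => ∑ a, (c a : ℝ) * ℓ a with hg
  have himg : patchLen ℓ '' W = g '' ((fun w : List A => fun a => w.count a) '' W) := by
    rw [← Set.image_comp]
    exact Set.image_congr (fun w _ => patchLen_eq_sum ℓ w)
  rw [himg]
  exact le_trans (Set.ncard_image_le (hWfin.image _)) (count_card_le X C hbal n)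

lemma main_bound (ℓ : A → ℝ) (hℓ : ∀ a : A, 0 < ℓ a) (X : Set (ℤ → A)) (C : ℕ)
    (hbal : CBalanced X C) (L : ℝ) :
    (patchLen ℓ '' {w | w ∈ Lang X ∧ w ≠ [] ∧ patchLen ℓ w ≤ L}).Finite ∧
    ((patchLen ℓ '' {w | w ∈ Lang X ∧ w ≠ [] ∧ patchLen ℓ w ≤ L}).ncard : ℝ)
      ≤ (⌊L / Finset.univ.inf' Finset.univ_nonempty ℓ⌋₊ : ℝ) *
        ((C : ℝ) + 1) ^ (Fintype.card A - 1) := by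
  classical
  set c : ℝ := Finset.univ.inf' Finset.univ_nonempty ℓ with hc
  have hc0 : 0 < c := by
    rw [hc, Finset.lt_inf'_iff]
    exact fun a _ => hℓ a
  have hcle : ∀ a, c ≤ ℓ a := fun a => Finset.inf'_le _ (Finset.mem_univ a)
  set N : ℕ := ⌊L / c⌋₊ with hN
  set S : Set (List A) := {w | w ∈ Lang X ∧ w ≠ [] ∧ patchLen ℓ w ≤ L} with hS
  have hlen : ∀ w ∈ S, 1 ≤ w.length ∧ w.length ≤ N := by
    intro w hw
    refine ⟨List.length_pos_iff.mpr hw.2.1, Nat.le_floor ?_⟩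
    rw [le_div_iff₀ hc0]
    exact le_trans (patchLen_ge ℓ c hcle w) hw.2.2
  have hTfin : (patchLen ℓ '' S).Finite := by
    apply Set.Finite.image
    exact Set.Finite.subset (List.finite_length_le A N) (fun w hw => (hlen w hw).2)
  refine ⟨hTfin, ?_⟩
  set P : ℕ → Set ℝ := fun n => patchLen ℓ '' {w | w ∈ Lang X ∧ w.length = n} with hP
  have hPfin : ∀ n, (P n).Finite := fun n =>
    Set.Finite.image _ (Set.Finite.subset (List.finite_length_le A n) (fun w hw => le_of_eq hw.2))
  have hsub : patchLen ℓ '' S ⊆ ⋃ n ∈ Finset.Icc 1 N, P n := by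
    rintro t ⟨w, hw, rfl⟩
    exact Set.mem_biUnion (Finset.mem_Icc.mpr (hlen w hw))
      ⟨w, ⟨hw.1, rfl⟩, rfl⟩
  have h1 : (patchLen ℓ '' S).ncard ≤ N * (C + 1) ^ (Fintype.card A - 1) := by
    calc (patchLen ℓ '' S).ncard
        ≤ (⋃ n ∈ Finset.Icc 1 N, P n).ncard :=
          Set.ncard_le_ncard hsub ((Finset.Icc 1 N).finite_toSet.biUnion fun n _ => hPfin n)
      _ ≤ ∑ n ∈ Finset.Icc 1 N, (P n).ncard := ncard_biUnion_le _ _ hPfin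
      _ ≤ ∑ _n ∈ Finset.Icc 1 N, (C + 1) ^ (Fintype.card A - 1) :=
          Finset.sum_le_sum (fun n _ => patch_card_le ℓ X C hbal n)
      _ = (Finset.Icc 1 N).card * (C + 1) ^ (Fintype.card A - 1) := by
          rw [Finset.sum_const, smul_eq_mul]
      _ ≤ N * (C + 1) ^ (Fintype.card A - 1) := by
          rw [Nat.card_Icc, Nat.add_sub_cancel]
  calc ((patchLen ℓ '' S).ncard : ℝ) ≤ ((N * (C + 1) ^ (Fintype.card A - 1) : ℕ) : ℝ) := by
        exact_mod_cast h1
    _ = (N : ℝ) * ((C : ℝ) + 1) ^ (Fintype.card A - 1) := by push_cast; ring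
end main


/-- for a tiling space of the line whose tile sequences form a
`C`-balanced subshift, the number of distinct patch lengths at most `L` is at
most `(L/ℓ_min)·(C+1)^(d-1)`; in particular the set of patch lengths is not
asymptotically dense. -/
theorem balanced_patch_lengths {A : Type} [Fintype A] [DecidableEq A] [Nonempty A]
    [TopologicalSpace A] [DiscreteTopology A]
    (ℓ : A → ℝ) (hℓ : ∀ a : A, 0 < ℓ a)
    (X : Set (ℤ → A)) (hclosed : IsClosed X) (hne : X.Nonempty)
    (hinv : shift '' X = X) (C : ℕ) (hbal : CBalanced X C) :
    (∀ L : ℝ, 0 < L →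
      ((patchLen ℓ '' {w | w ∈ Lang X ∧ w ≠ [] ∧ patchLen ℓ w ≤ L}).ncard : ℝ)
        ≤ (L / Finset.univ.inf' Finset.univ_nonempty ℓ) *
          ((C : ℝ) + 1) ^ (Fintype.card A - 1)) ∧
    ¬ AsympDense {t : ℝ | ∃ w ∈ Lang X, w ≠ [] ∧ patchLen ℓ w = t} := by
  classical
  set c : ℝ := Finset.univ.inf' Finset.univ_nonempty ℓ with hcdef
  have hc0 : 0 < c := by
    rw [hcdef, Finset.lt_inf'_iff]
    exact fun a _ => hℓ a
  set B : ℝ := ((C : ℝ) + 1) ^ (Fintype.card A - 1) with hBdef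
  have hB1 : (1 : ℝ) ≤ B := one_le_pow₀ (by have := Nat.cast_nonneg (α := ℝ) C; linarith)
  have part1 : ∀ L : ℝ, 0 < L →
      ((patchLen ℓ '' {w | w ∈ Lang X ∧ w ≠ [] ∧ patchLen ℓ w ≤ L}).ncard : ℝ)
        ≤ (L / c) * B := by
    intro L hL
    refine le_trans (main_bound ℓ hℓ X C hbal L).2 ?_
    apply mul_le_mul_of_nonneg_right _ (by positivity)
    exact Nat.floor_le (by positivity)
  refine ⟨part1, ?_⟩
  intro hdense
  set K : ℝ := B / c with hKdef
  have hK0 : 0 < K := div_pos (lt_of_lt_of_le one_pos hB1) hc0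
  set ε : ℝ := 1 / (4 * K) with hεdef
  have hε0 : 0 < ε := by positivity
  obtain ⟨R, hR⟩ := hdense ε hε0
  set R' : ℝ := max R 0 with hR'def
  have hR'0 : 0 ≤ R' := le_max_right R 0
  have hRR' : R ≤ R' := le_max_left R 0
  set M : ℕ := ⌊2 * K * (R' + 1 + ε)⌋₊ + 1 with hMdef
  have hMgt : 2 * K * (R' + 1 + ε) < M := by
    push_cast [hMdef]
    exact Nat.lt_floor_add_one _
  set L : ℝ := R' + 1 + 2 * ε * M + ε with hLdef
  have hL0 : 0 < L := by
    have h2 : (0:ℝ) ≤ 2 * ε * M :=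
      mul_nonneg (mul_nonneg (by norm_num) hε0.le) (Nat.cast_nonneg M)
    simp only [hLdef]
    linarith
  set t : Fin M → ℝ := fun k => R' + 1 + 2 * ε * (k.val : ℝ) with htdef
  have ht : ∀ k : Fin M, R < t k := by
    intro k
    have : (0:ℝ) ≤ (k.val : ℝ) := Nat.cast_nonneg _
    simp only [htdef]
    nlinarith
  have hexists : ∀ k : Fin M, ∃ s ∈ {t : ℝ | ∃ w ∈ Lang X, w ≠ [] ∧ patchLen ℓ w = t},
      |t k - s| < ε := fun k => hR (t k) (ht k)
  choose s hsS hsd using hexists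
  have hinj : Function.Injective s := by
    intro k j heq
    by_contra hne
    have hv : k.val ≠ j.val := fun h => hne (Fin.ext h)
    have e1 := abs_lt.mp (hsd k)
    have e2 := abs_lt.mp (hsd j)
    have e3 : t j - t k = 2 * ε * ((j.val : ℝ) - (k.val : ℝ)) := by
      simp only [htdef]; ring
    rcases lt_or_gt_of_ne hv with h | h
    · have hd : (k.val : ℝ) + 1 ≤ (j.val : ℝ) := by exact_mod_cast h
      nlinarith [e1.1, e1.2, e2.1, e2.2]
    · have hd : (j.val : ℝ) + 1 ≤ (k.val : ℝ) := by exact_mod_cast h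
      nlinarith [e1.1, e1.2, e2.1, e2.2]
  have hrange : Set.range s ⊆ patchLen ℓ '' {w | w ∈ Lang X ∧ w ≠ [] ∧ patchLen ℓ w ≤ L} := by
    rintro _ ⟨k, rfl⟩
    obtain ⟨w, hw, hwne, hwp⟩ := hsS k
    have hkM : (k.val : ℝ) ≤ (M : ℝ) := by exact_mod_cast le_of_lt k.isLt
    have hsk : s k ≤ L := by
      have := (abs_lt.mp (hsd k)).1
      simp only [htdef] at this
      simp only [hLdef]
      nlinarith
    exact ⟨w, ⟨hw, hwne, hwp ▸ hsk⟩, hwp⟩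
  have hfin := (main_bound ℓ hℓ X C hbal L).1
  have hcount : (M : ℝ) ≤ (L / c) * B := by
    have h1 : (Set.range s).ncard = M := by
      rw [← Nat.card_coe_set_eq, Nat.card_range_of_injective hinj]
      simp
    have h2 := Set.ncard_le_ncard hrange hfin
    rw [h1] at h2
    exact le_trans (by exact_mod_cast h2) (part1 L hL0)
  have hLK : (L / c) * B = K * L := by
    rw [hKdef]; ring
  have hεK : 2 * ε * K = 1 / 2 := by
    rw [hεdef]; field_simp; ring
  rw [hLK, hLdef] at hcount
  -- K*(R'+1+2εM+ε) = K(R'+1+ε) + 2εK*M = K(R'+1+ε) + M/2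
  have : (M : ℝ) ≤ K * (R' + 1 + ε) + (M : ℝ) / 2 := by nlinarith [hεK]
  nlinarith [hMgt]
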